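/- arXiv:2405.17026 — 8 statements merged into one kernel-verified Lean document; each statement's English description precedes it below -/
import Mathlib

section
/- Let ω ∈ [F_n, F_n] be a word in the commutator subgroup of the free group. Then 0 is a limit point of the set R(ω) = { μ(ω, G) : G a finite group } ⊆ [0,1]. -/
/-- The image of the evaluation map `G^n → G` induced by a word `ω ∈ F_n`. -/
def wordImage {n : ℕ} (ω : FreeGroup (Fin n)) (G : Type*) [Group G] : Set G :=
  Set.range fun f : Fin n → G => FreeGroup.lift f ω

/-- The image ratio `μ(ω, G) = |ω(G)|/|G|`. -/
noncomputable def imageRatio {n : ℕ} (ω : FreeGroup (Fin n)) (G : Type*) [Group G] : ℝ :=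
  (Nat.card (wordImage ω G) : ℝ) / (Nat.card G : ℝ)

/-- The set of image ratios of `ω` over all finite groups. -/
def ratioSet {n : ℕ} (ω : FreeGroup (Fin n)) : Set ℝ :=
  {x : ℝ | ∃ (G : Type) (_ : Group G) (_ : Finite G), imageRatio ω G = x}

lemma wordImage_comm {n : ℕ} (ω : FreeGroup (Fin n))
    (hω : ω ∈ commutator (FreeGroup (Fin n))) (G : Type) [CommGroup G] :
    wordImage ω G = {1} := by
  apply Set.eq_singleton_iff_unique_mem.2
  constructor
  · exact ⟨fun _ => 1, (Abelianization.commutator_subset_ker (FreeGroup.lift fun _ => (1:G)) hω)⟩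
  · rintro x ⟨f, rfl⟩
    exact Abelianization.commutator_subset_ker (FreeGroup.lift f) hω

lemma ratio_mem {n : ℕ} (ω : FreeGroup (Fin n))
    (hω : ω ∈ commutator (FreeGroup (Fin n))) (m : ℕ) [NeZero m] :
    (1 : ℝ) / m ∈ ratioSet ω := by
  refine ⟨Multiplicative (ZMod m), inferInstance, inferInstance, ?_⟩
  have h1 : wordImage ω (Multiplicative (ZMod m)) = {1} := wordImage_comm ω hω _
  rw [imageRatio, h1]
  simp [Nat.card_eq_fintype_card, ZMod.card]

theorem zero_mem_closure_ratioSet_of_mem_commutator {n : ℕ} (ω : FreeGroup (Fin n))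
    (hω : ω ∈ commutator (FreeGroup (Fin n))) :
    (0 : ℝ) ∈ closure (ratioSet ω) := by
  have : Filter.Tendsto (fun m : ℕ => (1 : ℝ) / (m + 1)) Filter.atTop (nhds 0) :=
    tendsto_one_div_add_atTop_nhds_zero_nat
  refine mem_closure_of_tendsto this ?_
  filter_upwards with m
  have : (1 : ℝ) / ((m + 1 : ℕ) : ℝ) ∈ ratioSet ω := ratio_mem ω hω (m + 1)
  simpa using this
end

section
/- Let q be a prime power and M a positive integer with p | M (where p is the characteristic) and gcd(q² − 1, M) = 1. Then every element of GL₂(F_q) that is not conjugate to a nontrivial Jordan block (λ 1; 0 λ) with λ ∈ F_q^× is an M-th power in GL₂(F_q), while no element conjugate to such a Jordan block is an M-th power. Consequently |{g^M : g ∈ GL₂(F_q)}| = (q²−1)(q²−q) − (q−1)(q²−1). -/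
/-!
Let K = q² − 1. By Cayley–Hamilton, A ∈ GL₂(F_q) satisfies A^{q²} = A, hence A^K = 1, unless
its characteristic polynomial is (X − λ)² and A = λ + N with N ≠ 0, N² = 0; these are exactly
the conjugates of Jordan blocks. Elements with A^K = 1 are M-th powers since gcd(K, M) = 1.
For A = λ + N, A^p = λ^p is scalar, so g^{pK} = 1 for all g, and every M-th power satisfies
A^K = 1 because p ∣ M. A Jordan-type A does not: p is prime to K, so A^K = 1 would make A a
power of the scalar A^p.
Counting: (λ, N) ↦ λ + N is a bijection from F_q^× × {N ≠ 0, N² = 0} onto the Jordan-type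
elements, and there are q² − 1 such N.
-/

open Matrix

/-- `A` is conjugate in `GL₂(F)` to a nontrivial Jordan block `(λ 1; 0 λ)` with `λ ∈ Fˣ`. -/
def IsJordanBlockConj {F : Type*} [Field F] (A : GL (Fin 2) F) : Prop :=
  ∃ (lam : Fˣ) (P : GL (Fin 2) F),
    (P : Matrix (Fin 2) (Fin 2) F) * !![(lam : F), 1; 0, (lam : F)] *
      ((P⁻¹ : GL (Fin 2) F) : Matrix (Fin 2) (Fin 2) F) = (A : Matrix (Fin 2) (Fin 2) F)

namespace Polynomial

variable {F : Type*} [Field F] [Fintype F]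

theorem Monic.dvd_X_pow_card_sq_sub_X_or_eq_sq {f : F[X]} (hf : f.Monic) (hdeg : f.natDegree = 2) :
    f ∣ X ^ Fintype.card F ^ 2 - X ∨ ∃ a, f = (X - C a) ^ 2 := by
  by_cases hroot : ∃ a, f.IsRoot a
  · obtain ⟨a, ha⟩ := hroot
    obtain ⟨g, rfl⟩ := dvd_iff_isRoot.2 ha
    have hg : g.Monic := (monic_X_sub_C a).of_mul_monic_left hf
    have hg1 : g.natDegree = 1 := by
      rw [(monic_X_sub_C a).natDegree_mul hg, natDegree_X_sub_C] at hdeg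
      omega
    obtain ⟨b, rfl⟩ : ∃ b, g = X - C b :=
      ⟨-g.coeff 0, by rw [C_neg, sub_neg_eq_add]; exact hg.eq_X_add_C hg1⟩
    rcases eq_or_ne a b with rfl | hab
    · exact Or.inr ⟨a, (sq _).symm⟩
    · have hdvd (c : F) : X - C c ∣ X ^ Fintype.card F ^ 2 - X :=
        dvd_iff_isRoot.2 (by simp [FiniteField.pow_card_pow])
      exact Or.inl ((pairwise_coprime_X_sub_C Function.injective_id hab).mul_dvd (hdvd a) (hdvd b))
  · push Not at hroot
    have hirr : Irreducible f :=
      irreducible_of_degree_le_three_of_not_isRoot (by simp [hdeg]) hroot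
    rw [← Nat.card_eq_fintype_card]
    exact Or.inl (hirr.natDegree_dvd_iff_dvd_X_pow_card_pow_sub_X.1 (hdeg ▸ dvd_rfl))

end Polynomial

section SquareZero

variable {F R : Type*} [Field F] [Ring R] [Algebra F R]

theorem eq_of_smul_one_add_eq_smul_one_add {a b : F} {N N' : R} (hN : N * N = 0)
    (hN' : N' * N' = 0) (hN'0 : N' ≠ 0) (h : a • 1 + N = b • 1 + N') : a = b := by
  have hN_eq : N = (b - a) • 1 + N' := by linear_combination (norm := module) h
  have hsq : (b - a) ^ 2 • N' = 0 :=
    calc (b - a) ^ 2 • N' = N * N * N' := by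
          rw [hN_eq]
          simp only [add_mul, mul_add, smul_mul_assoc, mul_smul_comm, one_mul, mul_one, hN',
            smul_zero, add_zero]
          rw [smul_smul, sq]
      _ = 0 := by rw [hN, zero_mul]
  rw [smul_eq_zero, or_iff_left hN'0] at hsq
  exact (sub_eq_zero.1 (pow_eq_zero_iff two_ne_zero |>.1 hsq)).symm

theorem isUnit_smul_one_add_of_mul_self_eq_zero (lam : Fˣ) {N : R} (hN : N * N = 0) :
    IsUnit ((lam : F) • 1 + N) :=
  IsNilpotent.isUnit_add_left_of_commute ⟨2, by rw [sq, hN]⟩ (isUnit_one.smul lam)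
    ((Commute.one_right N).smul_right _)

end SquareZero

namespace Matrix

variable {F : Type*} [Field F]

theorem fin_two_mul_self_eq_zero_iff {a b c d : F} :
    !![a, b; c, d] * !![a, b; c, d] = 0 ↔ d = -a ∧ a * a + b * c = 0 := by
  rw [← Matrix.ext_iff]
  simp only [mul_fin_two, Fin.forall_fin_two, of_apply, cons_val', cons_val_zero, cons_val_one,
    empty_val', cons_val_fin_one, zero_apply]
  constructor
  · rintro ⟨⟨h00, h01⟩, h10, h11⟩
    have htr : a + d = 0 := by
      by_contra hne
      have hb : b = 0 := (mul_eq_zero.1 (by linear_combination h01)).resolve_right hne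
      have hc : c = 0 := (mul_eq_zero.1 (by linear_combination h10)).resolve_right hne
      rw [hb, zero_mul, add_zero, mul_self_eq_zero] at h00
      rw [hc, zero_mul, zero_add, mul_self_eq_zero] at h11
      exact hne (by rw [h00, h11, add_zero])
    exact ⟨by linear_combination htr, h00⟩
  · rintro ⟨rfl, h⟩
    exact ⟨⟨h, by ring⟩, by ring, by linear_combination h⟩

/-- A nonzero `!![a, b; c, -a]` with `a * a + b * c = 0` has either `b ≠ 0`, and then
`c = -a²/b`, or `b = 0`, and then `a = 0 ≠ c`. -/
def squareZeroParam : (F × Fˣ) ⊕ Fˣ → Matrix (Fin 2) (Fin 2) F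
  | .inl (a, b) => !![a, b; -(a * a / b), -a]
  | .inr c => !![0, 0; c, 0]

theorem squareZeroParam_injective : Function.Injective (squareZeroParam (F := F)) := by
  rintro (⟨a, b⟩ | c) (⟨a', b'⟩ | c') h <;>
    simp only [squareZeroParam, ← Matrix.ext_iff, Fin.forall_fin_two, of_apply, cons_val',
      cons_val_zero, cons_val_one, empty_val', cons_val_fin_one] at h
  · simp [h.1.1, Units.ext h.1.2]
  · exact absurd h.1.2 b.ne_zero
  · exact absurd h.1.2.symm b'.ne_zero
  · simp [Units.ext h.2.1]

theorem range_squareZeroParam :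
    Set.range (squareZeroParam (F := F)) = {N | N ≠ 0 ∧ N * N = 0} := by
  ext N
  constructor
  · rintro ⟨(⟨a, b⟩ | c), rfl⟩
    · exact ⟨fun h => b.ne_zero (by simpa [squareZeroParam] using congrFun (congrFun h 0) 1),
        fin_two_mul_self_eq_zero_iff.2 ⟨rfl, by field_simp; ring⟩⟩
    · exact ⟨fun h => c.ne_zero (by simpa [squareZeroParam] using congrFun (congrFun h 1) 0),
        fin_two_mul_self_eq_zero_iff.2 ⟨by simp, by simp⟩⟩
  · rintro ⟨hN, hN2⟩
    obtain ⟨a, b, c, d, rfl⟩ : ∃ a b c d, N = !![a, b; c, d] := ⟨_, _, _, _, eta_fin_two N⟩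
    obtain ⟨rfl, h⟩ := fin_two_mul_self_eq_zero_iff.1 hN2
    by_cases hb : b = 0
    · subst hb
      obtain rfl : a = 0 := by simpa using h
      have hc : c ≠ 0 := by
        rintro rfl
        exact hN (by simp [← Matrix.ext_iff, Fin.forall_fin_two])
      exact ⟨.inr (Units.mk0 c hc), by simp [squareZeroParam]⟩
    · have hc : c = -(a * a / b) := by
        field_simp
        linear_combination h
      exact ⟨.inl (a, Units.mk0 b hb), by simp [squareZeroParam, hc]⟩

theorem card_setOf_ne_zero_and_mul_self_eq_zero [Fintype F] :
    Nat.card {N : Matrix (Fin 2) (Fin 2) F | N ≠ 0 ∧ N * N = 0} = Fintype.card F ^ 2 - 1 := by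
  rw [← range_squareZeroParam, Nat.card_range_of_injective squareZeroParam_injective,
    Nat.card_sum, Nat.card_prod, Nat.card_units, Nat.card_eq_fintype_card, ← add_one_mul,
    ← Nat.sq_sub_sq, one_pow]

theorem exists_conj_eq_of_mul_self_eq_zero {N : Matrix (Fin 2) (Fin 2) F} (hN : N ≠ 0)
    (hN2 : N * N = 0) :
    ∃ P : GL (Fin 2) F, (P : Matrix (Fin 2) (Fin 2) F) * !![0, 1; 0, 0] *
      ((P⁻¹ : GL (Fin 2) F) : Matrix (Fin 2) (Fin 2) F) = N := by
  obtain ⟨x, rfl⟩ : N ∈ Set.range (squareZeroParam (F := F)) := by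
    rw [range_squareZeroParam]
    exact ⟨hN, hN2⟩
  simp_rw [Units.mul_inv_eq_iff_eq_mul]
  -- `P` has columns `N v` and `v` for a basis vector `v` with `N v ≠ 0`.
  rcases x with ⟨a, b⟩ | c
  · refine ⟨GeneralLinearGroup.mkOfDetNeZero !![(b : F), 0; -a, 1] (by simp), ?_⟩
    ext i j; fin_cases i <;> fin_cases j <;> simp [squareZeroParam, mul_comm a]
  · refine ⟨GeneralLinearGroup.mkOfDetNeZero !![0, 1; (c : F), 0] (by simp), ?_⟩
    ext i j; fin_cases i <;> fin_cases j <;> simp [squareZeroParam]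

end Matrix

section Jordan

variable {F : Type*} [Field F]

theorem isJordanBlockConj_iff {A : GL (Fin 2) F} :
    IsJordanBlockConj A ↔ ∃ (lam : Fˣ) (N : Matrix (Fin 2) (Fin 2) F),
      N ≠ 0 ∧ N * N = 0 ∧ (A : Matrix (Fin 2) (Fin 2) F) = (lam : F) • 1 + N := by
  have hconj (P : GL (Fin 2) F) (c : F) (X : Matrix (Fin 2) (Fin 2) F) :
      P.val * (c • 1 + X) * (P⁻¹).val = c • 1 + P.val * X * (P⁻¹).val := by
    rw [mul_add, add_mul, mul_smul_comm, smul_mul_assoc, mul_one, Units.mul_inv]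
  have hblock (c : F) : !![c, 1; 0, c] = c • 1 + !![0, 1; 0, 0] := by
    ext i j; fin_cases i <;> fin_cases j <;> simp
  constructor
  · rintro ⟨lam, P, hP⟩
    refine ⟨lam, P.val * !![0, 1; 0, 0] * (P⁻¹).val, ?_, ?_, ?_⟩
    · intro h
      rw [Units.mul_inv_eq_iff_eq_mul, zero_mul, Units.mul_right_eq_zero] at h
      exact one_ne_zero (congrFun (congrFun h 0) 1)
    · rw [← sq, Units.conj_pow, sq, fin_two_mul_self_eq_zero_iff.2 ⟨by simp, by simp⟩, mul_zero,
        zero_mul]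
    · rw [← hP, hblock, hconj]
  · rintro ⟨lam, N, hN, hN2, hA⟩
    obtain ⟨P, hP⟩ := exists_conj_eq_of_mul_self_eq_zero hN hN2
    exact ⟨lam, P, by rw [hblock, hconj, hP, hA]⟩

theorem IsJordanBlockConj.notMem_center {A : GL (Fin 2) F} (hA : IsJordanBlockConj A) :
    A ∉ Subgroup.center (GL (Fin 2) F) := by
  obtain ⟨lam, N, hN, hN2, hAN⟩ := isJordanBlockConj_iff.1 hA
  rw [GeneralLinearGroup.mem_center_iff_val_mem_range_scalar]
  rintro ⟨c, hc⟩
  rw [hAN, scalar_apply, ← smul_one_eq_diagonal, ← add_zero (c • 1)] at hc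
  obtain rfl := eq_of_smul_one_add_eq_smul_one_add (zero_mul _) hN2 hN hc
  exact hN (add_left_cancel hc).symm

theorem IsJordanBlockConj.pow_char_mem_center (p : ℕ) [CharP F p] {A : GL (Fin 2) F}
    (hA : IsJordanBlockConj A) : A ^ p ∈ Subgroup.center (GL (Fin 2) F) := by
  rcases (CharP.char_is_prime_or_zero F p).symm with rfl | hp
  · exact (pow_zero A).symm ▸ one_mem _
  have := Fact.mk hp
  obtain ⟨lam, N, -, hN2, hAN⟩ := isJordanBlockConj_iff.1 hA
  have hNp : N ^ p = 0 := pow_eq_zero_of_le hp.two_le (by rw [sq, hN2])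
  rw [GeneralLinearGroup.mem_center_iff_val_mem_range_scalar]
  refine ⟨(lam : F) ^ p, ?_⟩
  rw [Units.val_pow_eq_pow_val, hAN, add_pow_char_of_commute p ((Commute.one_left N).smul_left _),
    hNp, add_zero, smul_pow, one_pow, scalar_apply, smul_one_eq_diagonal]

theorem IsJordanBlockConj.pow_ne_one (p : ℕ) [CharP F p] {A : GL (Fin 2) F}
    (hA : IsJordanBlockConj A) {n : ℕ} (hn : p.Coprime n) : A ^ n ≠ 1 := by
  intro h
  obtain ⟨m, hm⟩ :=
    exists_pow_eq_self_of_coprime (hn.coprime_dvd_right (orderOf_dvd_of_pow_eq_one h))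
  exact hA.notMem_center (hm ▸ Subgroup.pow_mem _ (hA.pow_char_mem_center p) m)

end Jordan

section FiniteField

variable {F : Type*} [Field F] [Fintype F]

open Polynomial in
theorem Matrix.pow_card_sq_eq_self_or_eq_smul_one_add (A : Matrix (Fin 2) (Fin 2) F) :
    A ^ Fintype.card F ^ 2 = A ∨
      ∃ (a : F) (N : Matrix (Fin 2) (Fin 2) F), N ≠ 0 ∧ N * N = 0 ∧ A = a • 1 + N := by
  have hdeg : A.charpoly.natDegree = 2 := by simp [charpoly_natDegree_eq_dim]
  rcases A.charpoly_monic.dvd_X_pow_card_sq_sub_X_or_eq_sq hdeg with hdvd | ⟨a, ha⟩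
  · left
    simpa [sub_eq_zero] using aeval_eq_zero_of_dvd_aeval_eq_zero hdvd A.aeval_self_charpoly
  · have hN2 : (A - a • 1) * (A - a • 1) = 0 := by
      simpa [ha, sq, Algebra.algebraMap_eq_smul_one] using A.aeval_self_charpoly
    by_cases hN : A - a • 1 = 0
    · left
      rw [sub_eq_zero.1 hN, _root_.smul_pow, one_pow, FiniteField.pow_card_pow]
    · exact Or.inr ⟨a, _, hN, hN2, by abel⟩

theorem pow_card_sq_sub_one_eq_one_or_isJordanBlockConj (A : GL (Fin 2) F) :
    A ^ (Fintype.card F ^ 2 - 1) = 1 ∨ IsJordanBlockConj A := by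
  rcases (A : Matrix (Fin 2) (Fin 2) F).pow_card_sq_eq_self_or_eq_smul_one_add with
    h | ⟨a, N, hN, hN2, hA⟩
  · left
    refine mul_right_cancel (b := A) ?_
    rw [pow_sub_one_mul (by positivity), one_mul]
    exact Units.ext (by simpa using h)
  · right
    have ha : a ≠ 0 := by
      rintro rfl
      rw [zero_smul, zero_add] at hA
      exact (A * A).ne_zero (by rw [Units.val_mul, hA, hN2])
    exact isJordanBlockConj_iff.2 ⟨Units.mk0 a ha, N, hN, hN2, hA⟩

theorem pow_char_mul_card_sq_sub_one_eq_one (p : ℕ) [CharP F p] (A : GL (Fin 2) F) :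
    A ^ (p * (Fintype.card F ^ 2 - 1)) = 1 := by
  rcases pow_card_sq_sub_one_eq_one_or_isJordanBlockConj A with h | hA
  · rw [mul_comm, pow_mul, h, one_pow]
  · rw [pow_mul]
    exact (pow_card_sq_sub_one_eq_one_or_isJordanBlockConj (A ^ p)).resolve_right
      fun hAp => hAp.notMem_center (hA.pow_char_mem_center p)

variable (F) in
theorem coprime_char_card_pow_sub_one (p : ℕ) [CharP F p] {n : ℕ} (hn : n ≠ 0) :
    p.Coprime (Fintype.card F ^ n - 1) := by
  rw [(CharP.char_is_prime F p).coprime_iff_not_dvd, ← CharP.cast_eq_zero_iff F p,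
    Nat.cast_sub (Nat.one_le_pow _ _ Fintype.card_pos), Nat.cast_pow,
    FiniteField.cast_card_eq_zero, zero_pow hn]
  simp

theorem card_setOf_isJordanBlockConj :
    Nat.card {A : GL (Fin 2) F | IsJordanBlockConj A} =
      (Fintype.card F - 1) * (Fintype.card F ^ 2 - 1) := by
  let f (x : Fˣ × {N : Matrix (Fin 2) (Fin 2) F | N ≠ 0 ∧ N * N = 0}) : GL (Fin 2) F :=
    (isUnit_smul_one_add_of_mul_self_eq_zero x.1 x.2.2.2).unit
  have hf : Function.Injective f := by
    rintro ⟨a, N, hN, hN2⟩ ⟨b, N', hN', hN'2⟩ h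
    have h' : (a : F) • 1 + N = (b : F) • 1 + N' := congrArg Units.val h
    obtain rfl := Units.ext (eq_of_smul_one_add_eq_smul_one_add hN2 hN'2 hN' h')
    obtain rfl := add_left_cancel h'
    rfl
  have hrange : Set.range f = {A | IsJordanBlockConj A} := by
    ext A
    simp [isJordanBlockConj_iff, f, Units.ext_iff, eq_comm, and_assoc]
  rw [← hrange, Nat.card_range_of_injective hf, Nat.card_prod,
    Matrix.card_setOf_ne_zero_and_mul_self_eq_zero, Nat.card_units, Nat.card_eq_fintype_card]

theorem not_isJordanBlockConj_iff_exists_pow_eq (p : ℕ) [CharP F p] {M : ℕ} (hpM : p ∣ M)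
    (hM : (Fintype.card F ^ 2 - 1).Coprime M) (A : GL (Fin 2) F) :
    ¬IsJordanBlockConj A ↔ ∃ g : GL (Fin 2) F, g ^ M = A := by
  constructor
  · intro hA
    have hAK := (pow_card_sq_sub_one_eq_one_or_isJordanBlockConj A).resolve_right hA
    obtain ⟨m, hm⟩ :=
      exists_pow_eq_self_of_coprime (hM.symm.coprime_dvd_right (orderOf_dvd_of_pow_eq_one hAK))
    exact ⟨A ^ m, by rw [← pow_mul, mul_comm, pow_mul, hm]⟩
  · rintro ⟨g, rfl⟩ hJ
    obtain ⟨k, rfl⟩ := hpM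
    apply hJ.pow_ne_one p (coprime_char_card_pow_sub_one F p two_ne_zero)
    rw [← pow_mul, mul_right_comm, pow_mul, pow_char_mul_card_sq_sub_one_eq_one p, one_pow]

end FiniteField

theorem powerMap_image_GL2_general (p M : ℕ)
    (F : Type) [Field F] [Fintype F] [CharP F p] (q : ℕ) (hq : q = Fintype.card F)
    (hpM : p ∣ M) (hgcd : Nat.gcd (q ^ 2 - 1) M = 1) :
    (∀ A : GL (Fin 2) F, (¬ IsJordanBlockConj A ↔ ∃ g : GL (Fin 2) F, g ^ M = A)) ∧
      Nat.card {A : GL (Fin 2) F | ∃ g : GL (Fin 2) F, g ^ M = A} =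
        (q ^ 2 - 1) * (q ^ 2 - q) - (q - 1) * (q ^ 2 - 1) := by
  subst hq
  have key := not_isJordanBlockConj_iff_exists_pow_eq p hpM hgcd
  have himage : {A : GL (Fin 2) F | ∃ g, g ^ M = A} = {A | IsJordanBlockConj A}ᶜ :=
    Set.ext fun A => (key A).symm
  refine ⟨key, ?_⟩
  rw [himage, Nat.card_coe_set_eq, Set.ncard_compl, ← Nat.card_coe_set_eq,
    card_setOf_isJordanBlockConj, card_GL_field, Fin.prod_univ_two]
  simp

theorem powerMap_image_GL2 (p r M : ℕ) (hp : p.Prime) (hr : 0 < r)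
    (F : Type) [Field F] [Fintype F] [CharP F p] (q : ℕ) (hq : q = Fintype.card F)
    (hcard : q = p ^ r) (hM : 0 < M) (hpM : p ∣ M) (hgcd : Nat.gcd (q ^ 2 - 1) M = 1) :
    (∀ A : GL (Fin 2) F, (¬ IsJordanBlockConj A ↔ ∃ g : GL (Fin 2) F, g ^ M = A)) ∧
      Nat.card {A : GL (Fin 2) F | ∃ g : GL (Fin 2) F, g ^ M = A} =
        (q ^ 2 - 1) * (q ^ 2 - q) - (q - 1) * (q ^ 2 - 1) :=
  powerMap_image_GL2_general p M F q hq hpM hgcd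
end

section
/- Let q = p^r be a prime power and M a positive integer with p | M and gcd(q² − 1, M) = 1. Then the image ratio of the M-th power map on GL₂(F_q) equals 1 − 1/q, i.e. |{g^M : g ∈ GL₂(F_q)}| / |GL₂(F_q)| = 1 − 1/q. -/
/-!
Write `q = |F|`. A matrix `A ∈ M₂(F)` either satisfies `A ^ q ^ 2 = A`, because its characteristic
polynomial is squarefree and hence divides `X ^ q ^ 2 - X`, or it is `a • 1 + N` with `N ^ 2 = 0`.
Since `(a • 1 + N) ^ n = a ^ n • 1 + n • a ^ (n - 1) • N`, both the `p`-th and the `q ^ 2`-th power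
kill `N`. So every `M`-th power with `p ∣ M` is fixed by `A ↦ A ^ q ^ 2`; conversely such an `A`
has order dividing `q ^ 2 - 1`, prime to `M`, and is therefore an `M`-th power. The invertible
matrices left over are the `a • 1 + N` with `a ≠ 0` and `N ≠ 0`: there are `(q - 1) (q ^ 2 - 1)`
of them, out of `|GL₂(F)| = (q ^ 2 - 1) (q ^ 2 - q)`.
-/

open Matrix

theorem Commute.add_pow_succ_of_sq_eq_zero {R : Type*} [Semiring R] {x y : R} (h : Commute x y)
    (hy : y ^ 2 = 0) (n : ℕ) : (x + y) ^ (n + 1) = x ^ (n + 1) + (n + 1) • (x ^ n * y) := by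
  induction n with
  | zero => simp
  | succ n ih =>
    have hyx : x ^ n * y * x = x ^ (n + 1) * y := by
      rw [mul_assoc, ← h.eq, ← mul_assoc, ← pow_succ]
    have hyy : x ^ n * y * y = 0 := by rw [mul_assoc, ← sq, hy, mul_zero]
    rw [pow_succ _ (n + 1), ih, add_mul, mul_add, mul_add, smul_mul_assoc, smul_mul_assoc, hyx, hyy,
      smul_zero, add_zero, ← pow_succ, add_assoc, ← succ_nsmul']

theorem smul_one_add_pow_of_cast_eq_zero {K R : Type*} [CommSemiring K] [Semiring R] [Algebra K R]
    (a : K) {N : R} (hN : N ^ 2 = 0) {n : ℕ} (hn : (n : K) = 0) :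
    (a • (1 : R) + N) ^ n = a ^ n • 1 := by
  cases n with
  | zero => simp
  | succ n =>
    rw [((Commute.one_left N).smul_left a).add_pow_succ_of_sq_eq_zero hN,
      ← Nat.cast_smul_eq_nsmul K, hn, zero_smul, add_zero, smul_pow, one_pow]

theorem isUnit_smul_one_add_of_sq_eq_zero {K R : Type*} [CommRing K] [Ring R] [Algebra K R]
    (a : Kˣ) {N : R} (hN : N ^ 2 = 0) : IsUnit ((a : K) • (1 : R) + N) := by
  refine IsNilpotent.isUnit_add_left_of_commute ⟨2, hN⟩ ?_ ((Commute.one_right N).smul_right _)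
  rw [Algebra.smul_def, mul_one]
  exact a.isUnit.map _

theorem Matrix.sq_sub_trace_smul_add_det_smul_one {R : Type*} [CommRing R]
    (A : Matrix (Fin 2) (Fin 2) R) : A ^ 2 - A.trace • A + A.det • 1 = 0 := by
  nontriviality R
  simpa [charpoly_fin_two, Algebra.algebraMap_eq_smul_one, smul_mul_assoc] using
    aeval_self_charpoly A

section Field

variable {F : Type*} [Field F]

theorem Matrix.sq_eq_zero_iff_trace_eq_zero_and_det_eq_zero (N : Matrix (Fin 2) (Fin 2) F) :
    N ^ 2 = 0 ↔ N.trace = 0 ∧ N.det = 0 := by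
  have hCH := N.sq_sub_trace_smul_add_det_smul_one
  constructor
  · intro hN
    have hdet : N.det = 0 := by simpa [det_pow] using congrArg det hN
    rw [hN, hdet, zero_smul, add_zero, zero_sub, neg_eq_zero, smul_eq_zero] at hCH
    exact ⟨hCH.elim id (fun h ↦ by simp [h]), hdet⟩
  · rintro ⟨htr, hdet⟩
    simpa [htr, hdet] using hCH

def Matrix.sqEqZeroEquiv : {N : Matrix (Fin 2) (Fin 2) F // N ^ 2 = 0} ≃
    {v : F × F × F // v.1 ^ 2 + v.2.1 * v.2.2 = 0} where
  toFun N := ⟨(N.1 0 0, N.1 0 1, N.1 1 0), by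
    obtain ⟨htr, hdet⟩ := (sq_eq_zero_iff_trace_eq_zero_and_det_eq_zero N.1).1 N.2
    rw [trace_fin_two] at htr
    rw [det_fin_two] at hdet
    linear_combination N.1 0 0 * htr - hdet⟩
  invFun v := ⟨!![v.1.1, v.1.2.1; v.1.2.2, -v.1.1], by
    rw [sq_eq_zero_iff_trace_eq_zero_and_det_eq_zero, trace_fin_two, det_fin_two]
    simp only [of_apply, cons_val', cons_val_zero, cons_val_one, empty_val', cons_val_fin_one]
    exact ⟨add_neg_cancel _, by linear_combination -v.2⟩⟩
  left_inv N := by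
    have htr := ((sq_eq_zero_iff_trace_eq_zero_and_det_eq_zero N.1).1 N.2).1
    rw [trace_fin_two] at htr
    apply Subtype.ext
    conv_rhs => rw [eta_fin_two N.1, eq_neg_of_add_eq_zero_right htr]
  right_inv _ := rfl

-- A point of the cone `α ^ 2 + β * γ = 0` is determined by `(α, β)` when `β ≠ 0`,
-- and by `γ` when `β = 0` (which forces `α = 0`).
def sqAddMulEqZeroEquiv [DecidableEq F] :
    {v : F × F × F // v.1 ^ 2 + v.2.1 * v.2.2 = 0} ≃ F × F where
  toFun v := if v.1.2.1 = 0 then (v.1.2.2, 0) else (v.1.1, v.1.2.1)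
  invFun w := if h : w.2 = 0 then ⟨(0, 0, w.1), by simp⟩
    else ⟨(w.1, w.2, -w.1 ^ 2 / w.2), by field_simp; ring⟩
  left_inv := by
    rintro ⟨⟨α, β, γ⟩, h⟩
    by_cases hβ : β = 0
    · obtain rfl : α = 0 := pow_eq_zero_iff two_ne_zero |>.1 (by simpa [hβ] using h)
      simp [hβ]
    · have hγ : -α ^ 2 / β = γ := by field_simp; linear_combination -h
      simp [hβ, hγ]
  right_inv := by
    rintro ⟨x, y⟩
    by_cases hy : y = 0 <;> simp [hy]

variable [Fintype F]

theorem Matrix.card_sq_eq_zero_and_ne_zero :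
    Nat.card {N : Matrix (Fin 2) (Fin 2) F // N ^ 2 = 0 ∧ N ≠ 0} = Fintype.card F ^ 2 - 1 := by
  classical
  have hset : {N : Matrix (Fin 2) (Fin 2) F | N ^ 2 = 0 ∧ N ≠ 0} = {N | N ^ 2 = 0} \ {0} := by
    ext; simp
  rw [← Set.coe_ofPred, Nat.card_coe_set_eq, hset, Set.ncard_sdiff_singleton_of_mem (by simp),
    ← Nat.card_coe_set_eq, Set.coe_ofPred,
    Nat.card_congr (sqEqZeroEquiv.trans sqAddMulEqZeroEquiv), Nat.card_prod,
    Nat.card_eq_fintype_card, sq]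

open Polynomial in
theorem Polynomial.Monic.dvd_X_pow_card_sq_sub_X_or_eq_X_sub_C_sq {f : F[X]} (hf : f.Monic)
    (hdeg : f.natDegree = 2) : f ∣ X ^ Fintype.card F ^ 2 - X ∨ ∃ a, f = (X - C a) ^ 2 := by
  have hdvd {g : F[X]} (hg : Irreducible g) (hgdeg : g.natDegree ∣ 2) :
      g ∣ X ^ Fintype.card F ^ 2 - X := by
    rwa [Fintype.card_eq_nat_card, ← hg.natDegree_dvd_iff_dvd_X_pow_card_pow_sub_X]
  by_cases hirr : Irreducible f
  · exact .inl (hdvd hirr (by rw [hdeg]))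
  obtain ⟨a, ha⟩ : ∃ a, f.IsRoot a := by
    rw [hf.irreducible_iff_roots_eq_zero_of_degree_le_three (by omega) (by omega)] at hirr
    obtain ⟨a, ha⟩ := Multiset.exists_mem_of_ne_zero hirr
    exact ⟨a, isRoot_of_mem_roots ha⟩
  obtain ⟨b, rfl⟩ : ∃ b, f = (X - C a) * (X - C b) := by
    obtain ⟨g, rfl⟩ := dvd_iff_isRoot.2 ha
    have hg : g.Monic := (monic_X_sub_C a).of_mul_monic_left hf
    have hg1 : g.natDegree = 1 := by
      rw [(monic_X_sub_C a).natDegree_mul hg, natDegree_X_sub_C] at hdeg; omega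
    exact ⟨-g.coeff 0, by rw [C_neg, sub_neg_eq_add, ← hg.eq_X_add_C hg1]⟩
  rcases eq_or_ne a b with rfl | hab
  · exact .inr ⟨a, (sq _).symm⟩
  · refine .inl ((isCoprime_X_sub_C_of_isUnit_sub (sub_ne_zero.2 hab).isUnit).mul_dvd ?_ ?_)
    all_goals exact hdvd (irreducible_X_sub_C _) (by rw [natDegree_X_sub_C]; exact one_dvd 2)

open Polynomial in
theorem Matrix.pow_card_sq_eq_self_or_exists_sq_sub_smul_one_eq_zero
    (A : Matrix (Fin 2) (Fin 2) F) :
    A ^ Fintype.card F ^ 2 = A ∨ ∃ a : F, (A - a • 1) ^ 2 = 0 := by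
  have hdeg : A.charpoly.natDegree = 2 := by rw [charpoly_natDegree_eq_dim, Fintype.card_fin]
  rcases A.charpoly_monic.dvd_X_pow_card_sq_sub_X_or_eq_X_sub_C_sq hdeg with ⟨g, hg⟩ | ⟨a, ha⟩
  · left
    simpa [aeval_self_charpoly, sub_eq_zero] using congrArg (aeval A) hg
  · right
    exact ⟨a, by simpa [ha, Algebra.algebraMap_eq_smul_one] using aeval_self_charpoly A⟩

theorem FiniteField.smul_one_add_pow_card_sq {R : Type*} [Semiring R] [Algebra F R] (a : F)
    {N : R} (hN : N ^ 2 = 0) : (a • (1 : R) + N) ^ Fintype.card F ^ 2 = a • 1 := by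
  rw [smul_one_add_pow_of_cast_eq_zero a hN (by simp), FiniteField.pow_card_pow]

theorem Matrix.pow_char_pow_card_sq (p : ℕ) [CharP F p] (A : Matrix (Fin 2) (Fin 2) F) :
    (A ^ p) ^ Fintype.card F ^ 2 = A ^ p := by
  rcases A.pow_card_sq_eq_self_or_exists_sq_sub_smul_one_eq_zero with hA | ⟨a, ha⟩
  · rw [pow_right_comm, hA]
  · have hAp : A ^ p = a ^ p • 1 := by
      simpa using smul_one_add_pow_of_cast_eq_zero a ha (CharP.cast_eq_zero F p)
    rw [hAp, smul_pow, one_pow, FiniteField.pow_card_pow]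

namespace Matrix.GeneralLinearGroup

theorem exists_pow_eq_iff_pow_card_sq_eq_self {p M : ℕ} [CharP F p] (hpM : p ∣ M)
    (hM : (Fintype.card F ^ 2 - 1).Coprime M) (A : GL (Fin 2) F) :
    (∃ g : GL (Fin 2) F, g ^ M = A) ↔ A ^ Fintype.card F ^ 2 = A := by
  constructor
  · rintro ⟨g, rfl⟩
    obtain ⟨m, rfl⟩ := hpM
    ext1
    simp only [Units.val_pow_eq_pow_val, pow_mul', pow_char_pow_card_sq]
  · intro hA
    have hA1 : A ^ (Fintype.card F ^ 2 - 1) = 1 :=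
      mul_eq_right.1 (by rw [pow_sub_one_mul (by positivity), hA])
    obtain ⟨m, hm⟩ := exists_pow_eq_self_of_coprime
      (hM.symm.coprime_dvd_right (orderOf_dvd_of_pow_eq_one hA1))
    exact ⟨A ^ m, by rw [pow_right_comm, hm]⟩

variable {n : Type*} [Fintype n] [DecidableEq n]

noncomputable def smulOneAddSqZero (x : Fˣ × {N : Matrix n n F // N ^ 2 = 0 ∧ N ≠ 0}) :
    {A : GL n F // A ^ Fintype.card F ^ 2 ≠ A} :=
  ⟨(isUnit_smul_one_add_of_sq_eq_zero x.1 x.2.2.1).unit, fun h ↦ x.2.2.2 <| by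
    have := congrArg Units.val h
    rw [Units.val_pow_eq_pow_val, IsUnit.unit_spec,
      FiniteField.smul_one_add_pow_card_sq _ x.2.2.1] at this
    exact left_eq_add.1 this⟩

@[simp]
theorem val_smulOneAddSqZero (x : Fˣ × {N : Matrix n n F // N ^ 2 = 0 ∧ N ≠ 0}) :
    ((smulOneAddSqZero x : GL n F) : Matrix n n F) = (x.1 : F) • 1 + x.2.1 :=
  IsUnit.unit_spec _

theorem smulOneAddSqZero_injective : Function.Injective (smulOneAddSqZero (F := F) (n := n)) := by
  intro ⟨a, N, hN, hN0⟩ ⟨b, N', hN', _⟩ h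
  have : Nontrivial (Matrix n n F) := nontrivial_of_ne N 0 hN0
  have hval : (a : F) • (1 : Matrix n n F) + N = (b : F) • 1 + N' := by
    simpa using congrArg (fun A ↦ ((A.1 : GL n F) : Matrix n n F)) h
  -- The scalar part is recovered as the `q ^ 2`-th power.
  obtain rfl : a = b := by
    have := congrArg (· ^ Fintype.card F ^ 2) hval
    simp only [FiniteField.smul_one_add_pow_card_sq _ hN,
      FiniteField.smul_one_add_pow_card_sq _ hN'] at this
    exact Units.ext (smul_left_injective F one_ne_zero this)
  obtain rfl := add_right_injective _ hval
  rfl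

theorem smulOneAddSqZero_surjective :
    Function.Surjective (smulOneAddSqZero (F := F) (n := Fin 2)) := by
  rintro ⟨A, hA⟩
  have hA' : (A : Matrix (Fin 2) (Fin 2) F) ^ Fintype.card F ^ 2 ≠ A := by
    rwa [Ne, Units.ext_iff, Units.val_pow_eq_pow_val] at hA
  obtain ⟨a, ha⟩ := (pow_card_sq_eq_self_or_exists_sq_sub_smul_one_eq_zero _).resolve_left hA'
  have hN0 : (A : Matrix (Fin 2) (Fin 2) F) - a • 1 ≠ 0 := by
    intro h
    rw [sub_eq_zero] at h
    exact hA' (by rw [h, smul_pow, one_pow, FiniteField.pow_card_pow])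
  have ha0 : a ≠ 0 := by
    rintro rfl
    rw [zero_smul, sub_zero] at ha
    exact not_isUnit_zero (ha ▸ A.isUnit.pow 2)
  refine ⟨(Units.mk0 a ha0, ⟨_, ha, hN0⟩), Subtype.ext (Units.ext ?_)⟩
  simp

theorem card_pow_card_sq_ne_self :
    Nat.card {A : GL (Fin 2) F // A ^ Fintype.card F ^ 2 ≠ A} =
      (Fintype.card F - 1) * (Fintype.card F ^ 2 - 1) := by
  rw [← Nat.card_congr (.ofBijective _ ⟨smulOneAddSqZero_injective, smulOneAddSqZero_surjective⟩),
    Nat.card_prod, Nat.card_units, Nat.card_eq_fintype_card, card_sq_eq_zero_and_ne_zero]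

end Matrix.GeneralLinearGroup

end Field

open Matrix.GeneralLinearGroup in
theorem powerMap_ratio_GL2_general (p M : ℕ)
    (F : Type) [Field F] [Fintype F] [CharP F p] (q : ℕ) (hq : q = Fintype.card F)
    (hpM : p ∣ M) (hgcd : Nat.gcd (q ^ 2 - 1) M = 1) :
    (Nat.card {A : GL (Fin 2) F | ∃ g : GL (Fin 2) F, g ^ M = A} : ℝ) /
        (Nat.card (GL (Fin 2) F) : ℝ) = 1 - 1 / q := by
  classical
  subst hq
  have hq : 1 < Fintype.card F := Fintype.one_lt_card
  have hsplit : (Nat.card {A : GL (Fin 2) F // A ^ Fintype.card F ^ 2 = A} : ℝ) =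
      Nat.card (GL (Fin 2) F) - Nat.card {A : GL (Fin 2) F // A ^ Fintype.card F ^ 2 ≠ A} := by
    rw [eq_sub_iff_add_eq, ← Nat.cast_add, ← Nat.card_sum, Nat.card_congr (Equiv.sumCompl _)]
  rw [Set.ext (exists_pow_eq_iff_pow_card_sq_eq_self hpM hgcd), Set.coe_ofPred, hsplit,
    card_pow_card_sq_ne_self, card_GL_field, Fin.prod_univ_two, Fin.val_zero, Fin.val_one,
    pow_zero, pow_one]
  have hq2 : Fintype.card F ≤ Fintype.card F ^ 2 := Nat.le_self_pow two_ne_zero _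
  push_cast [Nat.cast_sub hq.le, Nat.cast_sub (hq.le.trans hq2), Nat.cast_sub hq2]
  have hqR : (1 : ℝ) < Fintype.card F := by exact_mod_cast hq
  have h1 : (Fintype.card F : ℝ) - 1 ≠ 0 := by linarith
  have h2 : (Fintype.card F : ℝ) ^ 2 - 1 ≠ 0 := by nlinarith
  field_simp

theorem powerMap_ratio_GL2 (p r M : ℕ) (hp : p.Prime) (hr : 0 < r)
    (F : Type) [Field F] [Fintype F] [CharP F p] (q : ℕ) (hq : q = Fintype.card F)
    (hcard : q = p ^ r) (hM : 0 < M) (hpM : p ∣ M) (hgcd : Nat.gcd (q ^ 2 - 1) M = 1) :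
    (Nat.card {A : GL (Fin 2) F | ∃ g : GL (Fin 2) F, g ^ M = A} : ℝ) /
        (Nat.card (GL (Fin 2) F) : ℝ) = 1 - 1 / q :=
  powerMap_ratio_GL2_general p M F q hq hpM hgcd
end

section
/- Let M ≥ 2 be an integer with 6 ∤ M and smallest prime factor p₁. Then there exist infinitely many positive integers r such that gcd(p₁^{2r} − 1, M) = 1. -/
theorem infinite_coprime_powers (M : ℕ) (hM : 2 ≤ M) (h6 : ¬ (6 ∣ M)) :
    {r : ℕ | 0 < r ∧ Nat.gcd (M.minFac ^ (2 * r) - 1) M = 1}.Infinite := by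
  set p := M.minFac with hp
  have hpp : p.Prime := Nat.minFac_prime (by omega)
  apply ((Nat.infinite_setOf_prime.diff (Set.finite_Iic M)).mono)
  rintro r ⟨hr, hrM⟩
  simp only [Set.mem_Iic, not_le] at hrM
  refine ⟨hr.pos, ?_⟩
  by_contra hg
  set g := Nat.gcd (p ^ (2 * r) - 1) M with hgdef
  have hppow : 1 ≤ p ^ (2*r) := Nat.one_le_pow _ _ hpp.pos
  have hg2 : 2 ≤ g := by
    have h0 : g ≠ 0 := by
      intro h0
      have := Nat.eq_zero_of_gcd_eq_zero_right h0
      omega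
    omega
  set q := g.minFac with hq
  have hqp : q.Prime := Nat.minFac_prime (by omega)
  have hp2 : 2 ≤ p := hpp.two_le
  have hq2le : 2 ≤ q := hqp.two_le
  haveI : Fact q.Prime := ⟨hqp⟩
  have hq1 : q ∣ p ^ (2*r) - 1 := (Nat.minFac_dvd g).trans (Nat.gcd_dvd_left _ _)
  have hqM : q ∣ M := (Nat.minFac_dvd g).trans (Nat.gcd_dvd_right _ _)
  have hqne : q ≠ p := by
    intro h
    have h1 : p ∣ p ^ (2*r) := dvd_pow_self _ (by omega)
    have h2 : p ∣ p ^ (2*r) - (p ^ (2*r) - 1) := Nat.dvd_sub h1 (h ▸ hq1)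
    have h3 : p ^ (2*r) - (p ^ (2*r) - 1) = 1 := by omega
    rw [h3] at h2
    exact hpp.one_lt.ne' (Nat.eq_one_of_dvd_one h2)
  have hpq : p < q := lt_of_le_of_ne (Nat.minFac_le_of_dvd hqp.two_le hqM) (Ne.symm hqne)
  have hqleM : q ≤ M := Nat.le_of_dvd (by omega) hqM
  -- pass to ZMod q
  have hcast : ((p : ZMod q)) ^ (2*r) = 1 := by
    have h0 : ((p ^ (2*r) - 1 : ℕ) : ZMod q) = 0 := (ZMod.natCast_eq_zero_iff _ _).mpr hq1
    rw [Nat.cast_sub hppow] at h0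
    push_cast at h0
    linear_combination h0
  set u : ZMod q := (p : ZMod q) ^ 2 with hu
  have hur : u ^ r = 1 := by rw [hu, ← pow_mul]; exact hcast
  have hdvd : orderOf u ∣ r := orderOf_dvd_of_pow_eq_one hur
  have hune : u ≠ 0 := by
    rw [hu]
    apply pow_ne_zero
    simp only [Ne, ZMod.natCast_eq_zero_iff]
    intro hdq
    exact hqne ((Nat.prime_dvd_prime_iff_eq hqp hpp).mp hdq)
  have hodvd : orderOf u ∣ q - 1 := ZMod.orderOf_dvd_card_sub_one hune
  rcases (Nat.Prime.eq_one_or_self_of_dvd hr _ hdvd) with ho1 | hor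
  · -- order 1 : q ∣ p^2 - 1
    have hu1 : u = 1 := orderOf_eq_one_iff.mp ho1
    have hq2 : q ∣ p ^ 2 - 1 := by
      have h0 : ((p ^ 2 - 1 : ℕ) : ZMod q) = 0 := by
        rw [Nat.cast_sub (Nat.one_le_pow _ _ hpp.pos)]
        push_cast
        rw [← hu, hu1]
        ring
      exact (ZMod.natCast_eq_zero_iff _ _).mp h0
    have hfact : p ^ 2 - 1 = (p + 1) * (p - 1) := by
      have := Nat.sq_sub_sq p 1
      simpa using this
    rw [hfact] at hq2
    rcases (Nat.Prime.dvd_mul hqp).mp hq2 with h | h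
    · -- q ∣ p + 1, with q > p so q = p + 1
      have hqeq : q = p + 1 := by
        have := Nat.le_of_dvd (by omega) h
        omega
      rcases hpp.eq_two_or_odd' with h2 | hodd
      · -- p = 2, q = 3
        have h2M : 2 ∣ M := h2 ▸ (hp ▸ Nat.minFac_dvd M)
        have h3M : 3 ∣ M := by rw [← show q = 3 by omega]; exact hqM
        exact h6 ((Nat.Coprime.mul_dvd_of_dvd_of_dvd (by norm_num) h2M h3M))
      · -- p odd, q = p+1 even prime > 2, contradiction
        have : Even q := by rw [hqeq]; exact Odd.add_one hodd
        have := (Nat.Prime.even_iff hqp).mp this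
        omega
    · -- q ∣ p - 1 < q, impossible
      have := Nat.le_of_dvd (by omega) h
      omega
  · -- order r : r ∣ q - 1 ≤ M - 1 < r
    rw [hor] at hodvd
    have := Nat.le_of_dvd (by omega) hodvd
    omega
end

section
/- Every real number c in (0,1) is a limit of a sequence of numbers of the form (1/2^{m₀}) · ∏_{i=1}^{k} (1 − 1/2^{m_i}) with integers m₀ ≥ 0, m_i ≥ 1, k ≥ 0. Equivalently, the set of all finite products of elements from {1/2^m : m ≥ 1} ∪ {1 − 1/2^m : m ≥ 1} is dense in [0,1]. -/
/-- Finite products of numbers of the form `1/2^m` or `1 - 1/2^m` with `m ≥ 1`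
(the empty product `1` included). -/
def dyadicProducts : Set ℝ :=
  {x : ℝ | ∃ L : List ℝ,
    (∀ y ∈ L, (∃ m : ℕ, 1 ≤ m ∧ y = 1 / 2 ^ m) ∨ (∃ m : ℕ, 1 ≤ m ∧ y = 1 - 1 / 2 ^ m)) ∧
    L.prod = x}

/-!
Powers of the single generator `r = 1 - 1/2^m` already suffice: the sequence `r^n` decreases
from `1` to `0` in steps `r^n - r^(n+1) = (1 - r) r^n ≤ 1 - r = 1/2^m`, so it comes within `1/2^m`
of every `c ∈ (0, 1]`. Hence `(0, 1]`, and with it `[0, 1]`, lies in the closure. Conversely all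
generators lie in the closed submonoid `[0, 1]`.
-/

lemma exists_pow_mem_Ico_add_one_sub {K : Type*} [Field K] [LinearOrder K] [IsStrictOrderedRing K]
    [Archimedean K] {c r : K} (hc : 0 < c) (hc1 : c ≤ 1) (hr0 : 0 ≤ r) (hr1 : r < 1) :
    ∃ n : ℕ, r ^ n ∈ Set.Ico c (c + (1 - r)) := by
  have hex : ∃ n : ℕ, r ^ n < c := exists_pow_lt_of_lt_one hc hr1
  obtain ⟨n, hn⟩ : ∃ n, Nat.find hex = n + 1 :=
    Nat.exists_eq_succ_of_ne_zero fun h => by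
      simpa [h] using (Nat.find_spec hex).trans_le hc1
  have hlt : r ^ (n + 1) < c := hn ▸ Nat.find_spec hex
  have hle : c ≤ r ^ n := not_lt.1 (Nat.find_min hex (by omega))
  refine ⟨n, hle, ?_⟩
  calc r ^ n = r ^ (n + 1) + (1 - r) * r ^ n := by ring
    _ < c + (1 - r) * 1 :=
      add_lt_add_of_lt_of_le hlt
        (mul_le_mul_of_nonneg_left (pow_le_one₀ hr0 hr1.le) (by linarith))
    _ = c + (1 - r) := by ring

lemma one_sub_one_div_two_pow_pow_mem_dyadicProducts {m : ℕ} (hm : 1 ≤ m) (n : ℕ) :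
    (1 - 1 / 2 ^ m : ℝ) ^ n ∈ dyadicProducts :=
  ⟨List.replicate n _, fun _ hy => Or.inr ⟨m, hm, List.eq_of_mem_replicate hy⟩,
    List.prod_replicate _ _⟩

lemma dyadicProducts_subset_unitInterval : dyadicProducts ⊆ unitInterval := by
  rintro x ⟨L, hL, rfl⟩
  refine list_prod_mem (S := unitInterval.submonoid) fun y hy => ?_
  have one_div_two_pow_mem (m : ℕ) : (1 / 2 ^ m : ℝ) ∈ unitInterval :=
    unitInterval.div_mem zero_le_one (by positivity) (one_le_pow₀ one_le_two)
  rcases hL y hy with ⟨m, -, rfl⟩ | ⟨m, -, rfl⟩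
  · exact one_div_two_pow_mem m
  · exact Set.Icc.mem_iff_one_sub_mem.mp (one_div_two_pow_mem m)

lemma Ioc_subset_closure_dyadicProducts : Set.Ioc (0 : ℝ) 1 ⊆ closure dyadicProducts := by
  rintro c ⟨hc, hc1⟩
  refine Metric.mem_closure_iff.2 fun ε hε => ?_
  have hsmall : ∀ᶠ m : ℕ in Filter.atTop, (1 / 2 ^ m : ℝ) < ε := by
    simpa only [one_div_pow] using
      (tendsto_pow_atTop_nhds_zero_of_lt_one (by norm_num) one_half_lt_one).eventually
        (gt_mem_nhds hε)
  obtain ⟨m, hmε, hm⟩ := (hsmall.and (Filter.eventually_ge_atTop 1)).exists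
  have hpos : (0 : ℝ) < 1 / 2 ^ m := by positivity
  obtain ⟨n, hcn, hnc⟩ := exists_pow_mem_Ico_add_one_sub hc hc1
    (sub_nonneg.2 (div_le_one_of_le₀ (one_le_pow₀ one_le_two) (by positivity)))
    (sub_lt_self 1 hpos)
  refine ⟨_, one_sub_one_div_two_pow_pow_mem_dyadicProducts hm n, ?_⟩
  rw [Real.dist_eq, abs_sub_lt_iff]
  constructor <;> linarith

theorem closure_dyadicProducts : closure dyadicProducts = Set.Icc (0 : ℝ) 1 := by
  refine (closure_minimal dyadicProducts_subset_unitInterval isClosed_Icc).antisymm ?_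
  calc Set.Icc (0 : ℝ) 1 = closure (Set.Ioc 0 1) := (closure_Ioc zero_ne_one).symm
    _ ⊆ closure dyadicProducts :=
      closure_minimal Ioc_subset_closure_dyadicProducts isClosed_closure
end

section
/- Fix c ∈ (0,1) and let m be the unique nonnegative integer with 1/2 ≤ d := 2^m c < 1. Define sequences inductively: choose n₁ ≥ 1 with 1 − 1/2^{n₁} ≤ d < 1 − 1/2^{n₁+1}, set u₁ = 1 − 1/2^{n₁}, v₁ = 1 − 1/2^{n₁+1}, and given v₁,…,v_{i−1}, choose n_i with u_i = 1 − 1/2^{n_i} ≤ d/(v₁⋯v_{i−1}) < 1 − 1/2^{n_i+1} = v_i. Then the sequence (u_i) is non-decreasing and converges to 1, and consequently v₁v₂⋯v_{i−1}/2^m → c as i → ∞. -/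
/-!
Put `r i = d / (v₀ ⋯ v_{i-1})`, so that `r (i + 1) = r i / v i` and the greedy choice reads
`u i ≤ r i < v i = (1 + u i) / 2`. Since `v i < 1` the ratios increase, and
`1 - r i / v i ≤ (1 - r i) / (1 + r i)`, so the limit `L` of `r` satisfies `L (1 - L) ≤ 0`,
i.e. `L = 1`. Then `u i` is squeezed between `2 r i - 1` and `r i`, and the products `d / r i`
tend to `d = 2 ^ m c`.
-/

open Filter Finset Topology

lemma strictMono_one_sub_one_div_two_pow : StrictMono fun k : ℕ => (1 : ℝ) - 1 / 2 ^ k :=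
  fun a b hab => by dsimp only; gcongr; norm_num

lemma one_sub_one_div_two_pow_succ (k : ℕ) :
    (1 : ℝ) - 1 / 2 ^ (k + 1) = (1 + (1 - 1 / 2 ^ k)) / 2 := by
  rw [pow_succ]; ring

lemma one_sub_div_le_of_two_mul_le {r v : ℝ} (hr : 0 < r) (hrv : r < v) (hv : 2 * v ≤ 1 + r) :
    1 - r / v ≤ (1 - r) / (1 + r) := by
  have hv0 : 0 < v := hr.trans hrv
  rw [one_sub_div hv0.ne', div_le_div_iff₀ hv0 (by linarith)]
  nlinarith

lemma tendsto_one_of_one_sub_succ_le {r : ℕ → ℝ} (hr : Monotone r) (h0 : 0 < r 0)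
    (h1 : ∀ i, r i ≤ 1) (hstep : ∀ i, 1 - r (i + 1) ≤ (1 - r i) / (1 + r i)) :
    Tendsto r atTop (𝓝 1) := by
  obtain ⟨L, hL⟩ : ∃ L, Tendsto r atTop (𝓝 L) :=
    ⟨_, tendsto_atTop_ciSup hr ⟨1, Set.forall_mem_range.2 h1⟩⟩
  have hL0 : 0 < L := h0.trans_le (hr.ge_of_tendsto hL 0)
  have hL1 : L ≤ 1 := le_of_tendsto' hL h1
  have hfix : 1 - L ≤ (1 - L) / (1 + L) :=
    le_of_tendsto_of_tendsto' ((hL.comp (tendsto_add_atTop_nat 1)).const_sub 1)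
      ((hL.const_sub 1).div (hL.const_add 1) (by linarith)) hstep
  rw [le_div_iff₀ (by linarith)] at hfix
  obtain rfl : L = 1 := by nlinarith
  exact hL

/-- `r i` is the ratio still to be approximated at step `i`, `u i ≤ r i < v i` the greedy choice. -/
structure IsGreedyRatio (u v r : ℕ → ℝ) : Prop where
  v_eq : ∀ i, v i = (1 + u i) / 2
  le_ratio : ∀ i, u i ≤ r i
  ratio_lt : ∀ i, r i < v i
  ratio_succ : ∀ i, r (i + 1) = r i / v i

namespace IsGreedyRatio

variable {u v r : ℕ → ℝ} (h : IsGreedyRatio u v r)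
include h

lemma lt_one (i : ℕ) : v i < 1 := by linarith [h.v_eq i, h.le_ratio i, h.ratio_lt i]

lemma ratio_pos (hr0 : 0 < r 0) (i : ℕ) : 0 < r i := by
  induction i with
  | zero => exact hr0
  | succ i ih => rw [h.ratio_succ]; exact div_pos ih (ih.trans (h.ratio_lt i))

lemma ratio_monotone (hr0 : 0 < r 0) : Monotone r := monotone_nat_of_le_succ fun i => by
  have hri := h.ratio_pos hr0 i
  rw [h.ratio_succ]
  exact le_div_self hri.le (hri.trans (h.ratio_lt i)) (h.lt_one i).le

lemma ratio_tendsto_one (hr0 : 0 < r 0) : Tendsto r atTop (𝓝 1) := by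
  refine tendsto_one_of_one_sub_succ_le (h.ratio_monotone hr0) hr0
    (fun i => ((h.ratio_lt i).trans (h.lt_one i)).le) fun i => ?_
  rw [h.ratio_succ]
  exact one_sub_div_le_of_two_mul_le (h.ratio_pos hr0 i) (h.ratio_lt i)
    (by linarith [h.v_eq i, h.le_ratio i])

lemma tendsto_one (hr0 : 0 < r 0) : Tendsto u atTop (𝓝 1) := by
  have hr := h.ratio_tendsto_one hr0
  have hlow : Tendsto (fun i => 2 * r i - 1) atTop (𝓝 1) := by
    convert (hr.const_mul 2).sub_const 1; norm_num
  refine tendsto_of_tendsto_of_tendsto_of_le_of_le hlow hr (fun i => ?_) h.le_ratio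
  linarith [h.v_eq i, h.ratio_lt i]

end IsGreedyRatio

theorem greedy_dyadic_approx_general (c : ℝ)
    (m : ℕ) (d : ℝ) (hd : d = 2 ^ m * c) (hd1 : 1 / 2 ≤ d)
    (n : ℕ → ℕ) (u v : ℕ → ℝ)
    (hu : ∀ i, u i = 1 - 1 / 2 ^ (n i))
    (hv : ∀ i, v i = 1 - 1 / 2 ^ (n i + 1))
    (hlb : ∀ i, u i ≤ d / ∏ j ∈ range i, v j)
    (hub : ∀ i, d / ∏ j ∈ range i, v j < v i) :
    Monotone u ∧ Tendsto u atTop (nhds 1) ∧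
      Tendsto (fun i => (∏ j ∈ range i, v j) / 2 ^ m) atTop (nhds c) := by
  set r : ℕ → ℝ := fun i => d / ∏ j ∈ range i, v j
  have hd0 : 0 < d := by linarith
  have h : IsGreedyRatio u v r :=
    { v_eq := fun i => by rw [hv, hu, one_sub_one_div_two_pow_succ]
      le_ratio := hlb
      ratio_lt := hub
      ratio_succ := fun i => by simp only [r, prod_range_succ, div_div] }
  have hr0 : 0 < r 0 := by simpa [r] using hd0
  have hf := strictMono_one_sub_one_div_two_pow
  refine ⟨monotone_nat_of_le_succ fun i => ?_, h.tendsto_one hr0, ?_⟩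
  · have hlt : u i < v (i + 1) :=
      ((hlb i).trans (h.ratio_monotone hr0 i.le_succ)).trans_lt (hub (i + 1))
    rw [hu, hv, hf.lt_iff_lt] at hlt
    rw [hu, hu]
    exact hf.monotone (Nat.lt_succ_iff.1 hlt)
  · have hprod (i : ℕ) : ∏ j ∈ range i, v j = d / r i := (div_div_cancel₀ hd0.ne').symm
    have hlim : Tendsto (fun i => d / r i) atTop (𝓝 (d / 1)) :=
      tendsto_const_nhds.div (h.ratio_tendsto_one hr0) one_ne_zero
    simp_rw [hprod]
    convert hlim.div_const (2 ^ m)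
    rw [div_one, hd, mul_div_cancel_left₀ _ (by positivity)]

theorem greedy_dyadic_approx (c : ℝ) (hc : c ∈ Set.Ioo (0 : ℝ) 1)
    (m : ℕ) (d : ℝ) (hd : d = 2 ^ m * c) (hd1 : 1 / 2 ≤ d) (hd2 : d < 1)
    (n : ℕ → ℕ) (u v : ℕ → ℝ)
    (hn : ∀ i, 1 ≤ n i)
    (hu : ∀ i, u i = 1 - 1 / 2 ^ (n i))
    (hv : ∀ i, v i = 1 - 1 / 2 ^ (n i + 1))
    (hlb : ∀ i, u i ≤ d / ∏ j ∈ range i, v j)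
    (hub : ∀ i, d / ∏ j ∈ range i, v j < v i) :
    Monotone u ∧ Tendsto u atTop (nhds 1) ∧
      Tendsto (fun i => (∏ j ∈ range i, v j) / 2 ^ m) atTop (nhds c) :=
  greedy_dyadic_approx_general c m d hd hd1 n u v hu hv hlb hub
end

section
/- Let M = 2^a for an integer a ≥ 1. Then the closure of R(x^M) = { |{g^M : g ∈ G}|/|G| : G a finite group } in the reals equals the full interval [0,1]. -/
/-- The image ratio of the `M`-th power map on a finite group `G`. -/
noncomputable def powerRatio (M : ℕ) (G : Type*) [Group G] : ℝ :=
  (Nat.card {h : G | ∃ g : G, g ^ M = h} : ℝ) / (Nat.card G : ℝ)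

/-- The set of image ratios of the `M`-th power map over all finite groups. -/
def powerRatioSet (M : ℕ) : Set ℝ :=
  {x : ℝ | ∃ (G : Type) (_ : Group G) (_ : Finite G), powerRatio M G = x}

set_option linter.unusedSectionVars false
set_option linter.unusedVariables false


open Multiplicative

variable (F : Type) [Field F]

/-- multiplication by a unit as an additive automorphism -/
def mulAddEquiv (u : Fˣ) : F ≃+ F where
  toFun x := u * x
  invFun x := u⁻¹ * x
  left_inv x := by simp
  right_inv x := by simp
  map_add' x y := by ring

def affphi : Fˣ →* MulAut (Multiplicative F) where
  toFun u := AddEquiv.toMultiplicative (mulAddEquiv F u)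
  map_one' := by
    ext x
    show ofAdd ((1:Fˣ) * x.toAdd) = x
    simp
  map_mul' u v := by
    ext x
    show ofAdd ((u*v : Fˣ) * x.toAdd) = ofAdd ((u : F) * ((v : F) * x.toAdd))
    push_cast
    rw [mul_assoc]

abbrev AffGrp := Multiplicative F ⋊[affphi F] Fˣ

lemma affphi_apply (u : Fˣ) (x : Multiplicative F) :
    affphi F u x = ofAdd ((u : F) * x.toAdd) := rfl

lemma aff_pow (b : Multiplicative F) (g : Fˣ) (n : ℕ) :
    (⟨b, g⟩ : AffGrp F) ^ n =
      ⟨ofAdd (∑ k ∈ Finset.range n, (g : F) ^ k * b.toAdd), g ^ n⟩ := by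
  induction n with
  | zero =>
      simp only [pow_zero, Finset.range_zero, Finset.sum_empty, ofAdd_zero]
      rfl
  | succ n ih =>
      rw [pow_succ, ih, SemidirectProduct.mul_def]
      congr 1
      · show ofAdd _ * affphi F (g^n) b = _
        rw [affphi_apply]
        rw [← ofAdd_add]
        congr 1
        rw [Finset.sum_range_succ]
        push_cast
        ring
      · rw [pow_succ]

lemma exists_pow_eq_of_coprime' {G : Type*} [Group G] (M : ℕ) (h : G)
    (hc : M.Coprime (orderOf h)) : ∃ g : G, g ^ M = h := by
  obtain ⟨m, hm⟩ := exists_pow_eq_self_of_coprime hc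
  exact ⟨h ^ m, by rw [← pow_mul, mul_comm, pow_mul, hm]⟩

variable [Fintype F]

lemma aff_image (a M : ℕ) (ha : 1 ≤ a) (hM : M = 2 ^ a) [CharP F 2]
    (hodd : Odd (Nat.card Fˣ)) :
    {h : AffGrp F | ∃ g, g ^ M = h} = {h | h.right ≠ 1} ∪ {1} := by
  have hcop : ∀ n : ℕ, n ∣ Nat.card Fˣ → M.Coprime n := by
    intro n hn
    have h2 : Nat.Coprime 2 (Nat.card Fˣ) := Nat.coprime_two_left.mpr hodd
    exact Nat.Coprime.coprime_dvd_right hn (by rw [hM]; exact h2.pow_left a)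
  ext h
  simp only [Set.mem_setOf_eq, Set.mem_union, Set.mem_singleton_iff]
  constructor
  · rintro ⟨⟨b, u⟩, rfl⟩
    rw [aff_pow]
    by_cases hu : u ^ M = 1
    · right
      have hu1 : u = 1 := by
        have hd : orderOf u ∣ Nat.gcd M (Nat.card Fˣ) :=
          Nat.dvd_gcd (orderOf_dvd_iff_pow_eq_one.mpr hu) (orderOf_dvd_natCard u)
        have : orderOf u = 1 := Nat.eq_one_of_dvd_one (by
          rw [← (hcop (Nat.card Fˣ) dvd_rfl)]; exact hd)
        exact orderOf_eq_one_iff.mp this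
      subst hu1
      have hsum : (∑ k ∈ Finset.range M, ((1:Fˣ) : F) ^ k * b.toAdd) = 0 := by
        simp only [Units.val_one, one_pow, one_mul, Finset.sum_const,
          Finset.card_range, nsmul_eq_mul]
        have hMF : (M : F) = 0 := by
          have h2 : ((2:ℕ) : F) = 0 := CharP.cast_eq_zero F 2
          rw [hM, Nat.cast_pow, h2, zero_pow (by omega)]
        rw [hMF, zero_mul]
      rw [hsum, ofAdd_zero, one_pow]
      rfl
    · left; exact hu
  · rintro (hne | h1)
    · obtain ⟨b, u⟩ := h
      have hu : u ≠ 1 := hne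
      set d := orderOf u with hd
      have hdvd : (⟨b, u⟩ : AffGrp F) ^ d = 1 := by
        rw [aff_pow]
        have hu1 : ((u : F)) ≠ 1 := fun hc => hu (Units.ext hc)
        have hsum : (∑ k ∈ Finset.range d, ((u:Fˣ) : F) ^ k * b.toAdd) = 0 := by
          rw [← Finset.sum_mul, geom_sum_eq hu1]
          have : ((u : F)) ^ d = 1 := by
            rw [← Units.val_pow_eq_pow_val, pow_orderOf_eq_one, Units.val_one]
          rw [this, sub_self, zero_div, zero_mul]
        rw [hsum, pow_orderOf_eq_one, ofAdd_zero]
        rfl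
      have hdd : orderOf (⟨b, u⟩ : AffGrp F) ∣ d := orderOf_dvd_of_pow_eq_one hdvd
      exact exists_pow_eq_of_coprime' M _
        ((hcop d (orderOf_dvd_natCard u)).coprime_dvd_right hdd)
    · exact ⟨1, by rw [one_pow]; exact h1.symm⟩

def affEquivProd : AffGrp F ≃ Multiplicative F × Fˣ where
  toFun x := (x.left, x.right)
  invFun p := ⟨p.1, p.2⟩
  left_inv x := rfl
  right_inv p := rfl

lemma aff_finite : Finite (AffGrp F) := Finite.of_equiv _ (affEquivProd F).symm

lemma aff_card : Nat.card (AffGrp F) = Fintype.card F * (Fintype.card F - 1) := by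
  classical
  rw [Nat.card_congr (affEquivProd F), Nat.card_prod]
  rw [Nat.card_congr Multiplicative.toAdd, Nat.card_eq_fintype_card]
  rw [Nat.card_eq_fintype_card, Fintype.card_units]

lemma card_units_sub_one : Nat.card {u : Fˣ // u ≠ 1} = Fintype.card F - 2 := by
  have h1 : {u : Fˣ | u ≠ 1} = (Set.univ : Set Fˣ) \ {1} := by
    ext u; simp
  have : Nat.card {u : Fˣ // u ≠ 1} = ({u : Fˣ | u ≠ 1} : Set Fˣ).ncard :=
    Nat.card_coe_set_eq _
  classical
  rw [this, h1, Set.ncard_diff_singleton_of_mem (Set.mem_univ _), Set.ncard_univ,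
    Nat.card_eq_fintype_card, Fintype.card_units]
  omega

lemma aff_image_card (a M : ℕ) (ha : 1 ≤ a) (hM : M = 2 ^ a) [CharP F 2]
    (hodd : Odd (Nat.card Fˣ)) :
    Nat.card {h : AffGrp F | ∃ g, g ^ M = h} =
      Fintype.card F * (Fintype.card F - 2) + 1 := by
  haveI := aff_finite F
  rw [aff_image F a M ha hM hodd, Set.union_singleton, Nat.card_coe_set_eq,
    Set.ncard_insert_of_notMem (by simp [SemidirectProduct.one_right])]
  have e : {h : AffGrp F | h.right ≠ 1} ≃ Multiplicative F × {u : Fˣ // u ≠ 1} :=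
    { toFun := fun x => (x.1.left, ⟨x.1.right, x.2⟩)
      invFun := fun p => ⟨⟨p.1, p.2.1⟩, p.2.2⟩
      left_inv := fun x => rfl
      right_inv := fun p => rfl }
  rw [← Nat.card_coe_set_eq, Nat.card_congr e, Nat.card_prod,
    Nat.card_congr Multiplicative.toAdd, Nat.card_eq_fintype_card,
    card_units_sub_one]

lemma powerRatio_aff (a M : ℕ) (ha : 1 ≤ a) (hM : M = 2 ^ a) [CharP F 2]
    (hodd : Odd (Nat.card Fˣ)) :
    powerRatio M (AffGrp F) = 1 - 1 / (Fintype.card F : ℝ) := by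
  have hq : 2 ≤ Fintype.card F := Fintype.one_lt_card
  rw [powerRatio, aff_image_card F a M ha hM hodd, aff_card F]
  have h1 : ((Fintype.card F * (Fintype.card F - 2) + 1 : ℕ) : ℝ)
      = (Fintype.card F : ℝ) * ((Fintype.card F : ℝ) - 2) + 1 := by
    push_cast [Nat.cast_sub hq]; ring
  have h2 : ((Fintype.card F * (Fintype.card F - 1) : ℕ) : ℝ)
      = (Fintype.card F : ℝ) * ((Fintype.card F : ℝ) - 1) := by
    push_cast [Nat.cast_sub (by omega : 1 ≤ Fintype.card F)]; ring
  rw [h1, h2]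
  have hq' : (2:ℝ) ≤ (Fintype.card F : ℝ) := by exact_mod_cast hq
  have hne : (Fintype.card F : ℝ) ≠ 0 := by positivity
  have hne1 : (Fintype.card F : ℝ) - 1 ≠ 0 := by nlinarith
  field_simp
  ring

lemma ratio_mem_s12 (a M i : ℕ) (ha : 1 ≤ a) (hM : M = 2 ^ a) (hi : i ≠ 0) :
    (1 - (1/2 : ℝ) ^ i) ∈ powerRatioSet M := by
  set F := GaloisField 2 i with hF
  haveI : Fintype F := Fintype.ofFinite F
  have hcard : Fintype.card F = 2 ^ i := by
    rw [← Nat.card_eq_fintype_card, GaloisField.card 2 i hi]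
  have hodd : Odd (Nat.card Fˣ) := by
    classical
    rw [Nat.card_eq_fintype_card, Fintype.card_units, hcard]
    refine Nat.Even.sub_odd (Nat.one_le_two_pow) ?_ odd_one
    exact (Nat.even_pow).mpr ⟨even_two, hi⟩
  haveI := aff_finite F
  refine ⟨AffGrp F, inferInstance, inferInstance, ?_⟩
  rw [powerRatio_aff F a M ha hM hodd, hcard]
  push_cast
  rw [one_div, ← inv_pow]
  norm_num

lemma one_mem_prs (M : ℕ) : (1 : ℝ) ∈ powerRatioSet M := by
  refine ⟨PUnit, inferInstance, inferInstance, ?_⟩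
  have h : {h : PUnit | ∃ g : PUnit, g ^ M = h} = Set.univ := by
    ext h
    constructor
    · intro _; trivial
    · intro _; exact ⟨h, Subsingleton.elim _ _⟩
  rw [powerRatio, h]
  rw [Nat.card_congr (Equiv.Set.univ _)]
  simp

lemma mul_mem_prs {M : ℕ} {x y : ℝ} (hx : x ∈ powerRatioSet M)
    (hy : y ∈ powerRatioSet M) : x * y ∈ powerRatioSet M := by
  obtain ⟨G, _, _, hG⟩ := hx
  obtain ⟨H, _, _, hH⟩ := hy
  refine ⟨G × H, inferInstance, inferInstance, ?_⟩
  rw [← hG, ← hH]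
  have e : {h : G × H | ∃ g, g ^ M = h} ≃
      {h : G | ∃ g, g ^ M = h} × {h : H | ∃ g, g ^ M = h} :=
    { toFun := fun x => (⟨x.1.1, by
        obtain ⟨g, hg⟩ := x.2
        exact ⟨g.1, congrArg Prod.fst hg⟩⟩,
        ⟨x.1.2, by
        obtain ⟨g, hg⟩ := x.2
        exact ⟨g.2, congrArg Prod.snd hg⟩⟩)
      invFun := fun p => ⟨(p.1.1, p.2.1), by
        obtain ⟨g1, h1⟩ := p.1.2
        obtain ⟨g2, h2⟩ := p.2.2
        exact ⟨(g1, g2), Prod.ext h1 h2⟩⟩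
      left_inv := fun x => rfl
      right_inv := fun p => by
        ext <;> rfl }
  rw [powerRatio, powerRatio, powerRatio, Nat.card_congr e, Nat.card_prod,
    Nat.card_prod]
  push_cast
  rw [div_mul_div_comm]

lemma prs_subset_Icc (M : ℕ) : powerRatioSet M ⊆ Set.Icc (0:ℝ) 1 := by
  rintro x ⟨G, _, _, rfl⟩
  constructor
  · exact div_nonneg (Nat.cast_nonneg _) (Nat.cast_nonneg _)
  · apply div_le_one_of_le₀
    · exact_mod_cast Nat.card_le_card_of_injective _ Subtype.val_injective
    · exact Nat.cast_nonneg _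

lemma pow_half_mem (a M : ℕ) (ha : 1 ≤ a) (hM : M = 2 ^ a) (n : ℕ) :
    ((1/2 : ℝ) ^ n) ∈ powerRatioSet M := by
  induction n with
  | zero => simpa using one_mem_prs M
  | succ n ih =>
      rw [pow_succ]
      refine mul_mem_prs ih ?_
      have h : (1/2 : ℝ) = 1 - (1/2) ^ 1 := by norm_num
      rw [h]
      exact ratio_mem_s12 a M 1 ha hM one_ne_zero

lemma step_lemma (a M : ℕ) (ha : 1 ≤ a) (hM : M = 2 ^ a) {p t : ℝ}
    (hp : p ∈ powerRatioSet M) (ht : 0 < t) (h1 : t ≤ p) (h2 : p ≤ 2 * t) :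
    ∃ p' ∈ powerRatioSet M, t ≤ p' ∧ p' ≤ 2 * t ∧ p' - t ≤ (p - t) / 2 := by
  rcases eq_or_lt_of_le h1 with rfl | hlt
  · exact ⟨t, hp, le_refl t, h2, by linarith⟩
  · have hppos : 0 < p := ht.trans hlt
    have hex : ∃ m, t < p * (1 - (1/2 : ℝ) ^ m) := by
      obtain ⟨m, hm⟩ := exists_pow_lt_of_lt_one
        (div_pos (show (0:ℝ) < p - t by linarith) hppos) (by norm_num : (1/2:ℝ) < 1)
      refine ⟨m, ?_⟩
      have h := (lt_div_iff₀ hppos).mp hm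
      have h2' : p * (1 - (1/2:ℝ)^m) = p - (1/2:ℝ)^m * p := by ring
      linarith
    classical
    set m₀ := Nat.find hex with hm₀def
    have hm₀ : t < p * (1 - (1/2 : ℝ) ^ m₀) := Nat.find_spec hex
    have hm₀pos : m₀ ≠ 0 := by
      intro h0
      rw [h0] at hm₀
      simp at hm₀
      linarith
    have hmin : ¬ t < p * (1 - (1/2 : ℝ) ^ (m₀ - 1)) := Nat.find_min hex (by omega)
    push_neg at hmin
    have epow : (1/2 : ℝ) ^ (m₀ - 1) = 2 * (1/2) ^ m₀ := by
      have h0 : m₀ - 1 + 1 = m₀ := by omega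
      have h' : (1/2:ℝ) ^ m₀ = (1/2) ^ (m₀ - 1) * (1/2) := by
        rw [← pow_succ, h0]
      linarith
    rw [epow] at hmin
    have key : p * (1 - (1/2:ℝ)^m₀) - t ≤ (p - t)/2 := by
      nlinarith [pow_pos (show (0:ℝ) < 1/2 by norm_num) m₀]
    refine ⟨p * (1 - (1/2:ℝ)^m₀),
      mul_mem_prs hp (ratio_mem_s12 a M m₀ ha hM hm₀pos), hm₀.le, by linarith, key⟩

lemma iterate_lemma (a M : ℕ) (ha : 1 ≤ a) (hM : M = 2 ^ a) {p₀ t : ℝ}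
    (hp₀ : p₀ ∈ powerRatioSet M) (ht : 0 < t) (h1 : t ≤ p₀) (h2 : p₀ ≤ 2 * t) :
    ∀ n : ℕ, ∃ p ∈ powerRatioSet M, t ≤ p ∧ p ≤ 2 * t ∧ p - t ≤ (p₀ - t) / 2 ^ n := by
  intro n
  induction n with
  | zero => exact ⟨p₀, hp₀, h1, h2, by simp⟩
  | succ n ih =>
      obtain ⟨p, hpS, hq1, hq2, hq3⟩ := ih
      obtain ⟨p', hp'S, hr1, hr2, hr3⟩ := step_lemma a M ha hM hpS ht hq1 hq2
      refine ⟨p', hp'S, hr1, hr2, ?_⟩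
      have hpow : (0:ℝ) < 2 ^ n := by positivity
      have e : (p₀ - t) / 2 ^ n / 2 = (p₀ - t) / 2 ^ (n + 1) := by
        rw [div_div, ← pow_succ]
      calc p' - t ≤ (p - t) / 2 := hr3
        _ ≤ (p₀ - t) / 2 ^ n / 2 := by linarith
        _ = (p₀ - t) / 2 ^ (n + 1) := e

theorem closure_powerRatioSet_eq_Icc (a M : ℕ) (ha : 1 ≤ a) (hM : M = 2 ^ a) :
    closure (powerRatioSet M) = Set.Icc (0 : ℝ) 1 := by
  apply subset_antisymm
  · exact closure_minimal (prs_subset_Icc M) isClosed_Icc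
  · rintro t ⟨ht0, ht1⟩
    rw [Metric.mem_closure_iff]
    intro ε hε
    rcases eq_or_lt_of_le ht0 with rfl | htpos
    · obtain ⟨n, hn⟩ := exists_pow_lt_of_lt_one hε (by norm_num : (1/2:ℝ) < 1)
      refine ⟨(1/2)^n, pow_half_mem a M ha hM n, ?_⟩
      rw [Real.dist_eq]
      have : (0:ℝ) < (1/2:ℝ)^n := by positivity
      rw [abs_of_nonpos (by linarith)]
      linarith
    · classical
      have hex : ∃ j, (1/2:ℝ)^j < t := exists_pow_lt_of_lt_one htpos (by norm_num)
      set j₀ := Nat.find hex with hj₀def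
      have hj₀ : (1/2:ℝ)^j₀ < t := Nat.find_spec hex
      have hj₀pos : j₀ ≠ 0 := by
        intro h0
        rw [h0] at hj₀
        simp at hj₀
        linarith
      have hmin : ¬ (1/2:ℝ)^(j₀-1) < t := Nat.find_min hex (by omega)
      push_neg at hmin
      set p₀ := (1/2:ℝ)^(j₀-1) with hp₀def
      have hp₀S : p₀ ∈ powerRatioSet M := pow_half_mem a M ha hM (j₀-1)
      have h2 : p₀ ≤ 2 * t := by
        have h0 : j₀ - 1 + 1 = j₀ := by omega
        have h' : (1/2:ℝ) ^ j₀ = p₀ * (1/2) := by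
          rw [hp₀def, ← pow_succ, h0]
        linarith
      -- choose n with (p₀ - t)/2^n < ε
      have hb : (0:ℝ) < p₀ - t + 1 := by linarith
      obtain ⟨n, hn⟩ := exists_pow_lt_of_lt_one
        (div_pos hε hb) (by norm_num : (1/2:ℝ) < 1)
      have hlt : (p₀ - t) / 2 ^ n < ε := by
        have h' := (lt_div_iff₀ hb).mp hn
        have hpow : (0:ℝ) < (1/2:ℝ) ^ n := by positivity
        have e : (p₀ - t) / 2 ^ n = (p₀ - t) * (1/2:ℝ) ^ n := by
          rw [div_eq_mul_inv, one_div, inv_pow]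
        nlinarith
      obtain ⟨p, hpS, hq1, hq2, hq3⟩ :=
        iterate_lemma a M ha hM hp₀S htpos hmin h2 n
      refine ⟨p, hpS, ?_⟩
      rw [Real.dist_eq, abs_of_nonpos (by linarith), neg_sub]
      linarith
end

section
/- Let M = 2^a with a ≥ 2, considered as the polynomial map x ↦ x^M on finite F₂-algebras. Then the closure of R(x^M) = { |{r^M : r ∈ A}|/|A| : A a finite F₂-algebra } equals [0,1]. -/
/-!
The ratios form a multiplicative submonoid of `[0, 1]`: products of algebras multiply them and
the zero ring has ratio `1`. The powers of any `ρ ∈ [0, 1)` form a `(1 - ρ)`-net of `[0, 1]`, so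
it suffices to find ratios `ρ < 1` arbitrarily close to `1`. They come from the skew dual numbers
`F[ε; Frob]/(ε²)` over `F = 𝔽_{2^r}`: squaring permutes the elements whose constant term is
neither `0` nor `1`, so `x ↦ x ^ 2 ^ a` misses at most `2 |F|` of the `|F|²` elements; and `ε` is
not a `2 ^ a`-th power, because a root would have constant term `0` and hence square to `0`.
-/

/-- The image ratio of the `M`-th power map on a finite ring `A`. -/
noncomputable def ringPowerRatio (M : ℕ) (A : Type*) [Ring A] : ℝ :=
  (Nat.card {y : A | ∃ r : A, r ^ M = y} : ℝ) / (Nat.card A : ℝ)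

/-- The set of image ratios of the `M`-th power map over all finite `𝔽₂`-algebras. -/
def ringPowerRatioSet (M : ℕ) : Set ℝ :=
  {x : ℝ | ∃ (A : Type) (_ : Ring A) (_ : Algebra (ZMod 2) A) (_ : Finite A),
    ringPowerRatio M A = x}

open Set Filter Topology

theorem exists_dist_pow_lt {ρ t : ℝ} (hρ₀ : 0 ≤ ρ) (hρ₁ : ρ < 1) (ht₀ : 0 ≤ t) (ht₁ : t ≤ 1) :
    ∃ k : ℕ, dist (ρ ^ k) t < 1 - ρ := by
  classical
  have hex : ∃ k : ℕ, ρ ^ k < t + (1 - ρ) := exists_pow_lt_of_lt_one (by linarith) hρ₁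
  refine ⟨Nat.find hex, ?_⟩
  have hlt : ρ ^ Nat.find hex < t + (1 - ρ) := Nat.find_spec hex
  rw [Real.dist_eq, abs_sub_lt_iff]
  refine ⟨by linarith, ?_⟩
  rcases Nat.eq_zero_or_eq_succ_pred (Nat.find hex) with h0 | hsucc
  · rw [h0, pow_zero]; linarith
  · -- the previous power is still `≥ t + (1 - ρ)`, and one more factor `ρ` costs at most `1 - ρ`
    have hprev : t + (1 - ρ) ≤ ρ ^ (Nat.find hex).pred :=
      not_lt.1 (Nat.find_min hex (Nat.pred_lt_self (by omega)))
    have hle : ρ ^ (Nat.find hex).pred ≤ 1 := pow_le_one₀ hρ₀ hρ₁.le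
    rw [hsucc, pow_succ]
    nlinarith

theorem closure_coe_submonoid_eq_Icc (S : Submonoid ℝ) (hS : (S : Set ℝ) ⊆ Icc 0 1)
    (h1 : (1 : ℝ) ∈ closure ((S : Set ℝ) ∩ Iio 1)) : closure (S : Set ℝ) = Icc 0 1 := by
  refine (closure_minimal hS isClosed_Icc).antisymm fun t ht ↦
    Metric.mem_closure_iff.2 fun ε hε ↦ ?_
  obtain ⟨ρ, ⟨hρS, hρ₁⟩, hρε⟩ := Metric.mem_closure_iff.1 h1 ε hε
  obtain ⟨k, hk⟩ := exists_dist_pow_lt (hS hρS).1 hρ₁ ht.1 ht.2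
  refine ⟨ρ ^ k, pow_mem hρS k, ?_⟩
  rw [Real.dist_eq, abs_of_pos (sub_pos.2 hρ₁)] at hρε
  rw [dist_comm]
  linarith

section RingPowerRatio

variable {A : Type*} [Ring A] (M : ℕ)

theorem ringPowerRatio_eq_ncard_range :
    ringPowerRatio M A = (range (· ^ M : A → A)).ncard / Nat.card A := by
  rw [ringPowerRatio, ← Nat.card_coe_set_eq]
  rfl

theorem ringPowerRatio_prod (B : Type*) [Ring B] :
    ringPowerRatio M (A × B) = ringPowerRatio M A * ringPowerRatio M B := by
  simp only [ringPowerRatio_eq_ncard_range]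
  rw [show (· ^ M : A × B → A × B) = Prod.map (· ^ M) (· ^ M) from rfl, range_prodMap,
    ncard_prod, Nat.card_prod]
  push_cast
  exact mul_div_mul_comm _ _ _ _

theorem ringPowerRatio_punit : ringPowerRatio M PUnit = 1 := by
  simp [ringPowerRatio]

variable [Finite A]

theorem ringPowerRatio_mem_Icc : ringPowerRatio M A ∈ Icc 0 1 := by
  rw [ringPowerRatio]
  exact ⟨by positivity, div_le_one_of_le₀ (mod_cast Finite.card_subtype_le _) (by positivity)⟩

theorem ringPowerRatio_lt_one (h : ¬ Function.Surjective (· ^ M : A → A)) :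
    ringPowerRatio M A < 1 := by
  rw [ringPowerRatio_eq_ncard_range, div_lt_one (mod_cast Nat.card_pos)]
  exact_mod_cast ncard_lt_card (by rwa [Ne, range_eq_univ])

theorem one_sub_ncard_div_le_ringPowerRatio {s : Set A} (hs : sᶜ ⊆ range (· ^ M)) :
    1 - s.ncard / Nat.card A ≤ ringPowerRatio M A := by
  have hpos : (0 : ℝ) < Nat.card A := mod_cast Nat.card_pos
  have hcompl : ((range (· ^ M : A → A))ᶜ.ncard : ℝ) ≤ s.ncard :=
    mod_cast ncard_le_ncard (compl_subset_comm.1 hs)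
  rw [ringPowerRatio_eq_ncard_range, one_sub_div hpos.ne', div_le_div_iff_of_pos_right hpos,
    ← ncard_add_ncard_compl (range (· ^ M : A → A)), Nat.cast_add]
  linarith

end RingPowerRatio

def ringPowerRatioSubmonoid (M : ℕ) : Submonoid ℝ where
  carrier := ringPowerRatioSet M
  one_mem' := ⟨PUnit, inferInstance, inferInstance, inferInstance, ringPowerRatio_punit M⟩
  mul_mem' := by
    rintro _ _ ⟨A, _, _, _, rfl⟩ ⟨B, _, _, _, rfl⟩
    exact ⟨A × B, inferInstance, inferInstance, inferInstance, ringPowerRatio_prod M B⟩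

theorem ringPowerRatioSet_subset_Icc (M : ℕ) : ringPowerRatioSet M ⊆ Icc 0 1 := by
  rintro _ ⟨A, _, _, _, rfl⟩
  exact ringPowerRatio_mem_Icc M

def RightTwist {R : Type*} [CommRing R] (_ : R →+* R) : Type _ := R

namespace RightTwist

variable {R : Type*} [CommRing R] (σ : R →+* R)

instance : AddCommGroup (RightTwist σ) := inferInstanceAs (AddCommGroup R)

instance : Module R (RightTwist σ) := inferInstanceAs (Module R R)

instance : Module Rᵐᵒᵖ (RightTwist σ) :=
  Module.compHom R (σ.comp (RingEquiv.toOpposite R).symm.toRingHom)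

instance [Nontrivial R] : Nontrivial (RightTwist σ) := inferInstanceAs (Nontrivial R)

instance [Finite R] : Finite (RightTwist σ) := inferInstanceAs (Finite R)

theorem natCard_eq : Nat.card (RightTwist σ) = Nat.card R := rfl

theorem op_smul_eq (c : R) (m : RightTwist σ) : MulOpposite.op c • m = σ c • m := rfl

instance : SMulCommClass R Rᵐᵒᵖ (RightTwist σ) :=
  ⟨fun c c' (m : R) ↦ mul_left_comm c (σ c'.unop) m⟩

end RightTwist

namespace TrivSqZeroExt

variable {R M : Type*}

instance charP [Semiring R] [AddCommMonoid M] [Module R M] [Module Rᵐᵒᵖ M] (p : ℕ) [CharP R p] :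
    CharP (TrivSqZeroExt R M) p :=
  charP_of_injective_ringHom (f := inlHom R M) (inl_injective) p

instance [Finite R] [Finite M] : Finite (TrivSqZeroExt R M) := inferInstanceAs (Finite (R × M))

theorem natCard_eq : Nat.card (TrivSqZeroExt R M) = Nat.card R * Nat.card M := Nat.card_prod R M

theorem ncard_fst_preimage (s : Set R) :
    (fst ⁻¹' s : Set (TrivSqZeroExt R M)).ncard = s.ncard * Nat.card M := by
  change (Prod.fst ⁻¹' s : Set (R × M)).ncard = _
  rw [← prod_univ, ncard_prod, ncard_univ]

theorem pow_ne_inr [Semiring R] [IsReduced R] [AddCommMonoid M] [Module R M] [Module Rᵐᵒᵖ M]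
    [SMulCommClass R Rᵐᵒᵖ M] {n : ℕ} (hn : 2 ≤ n) (x : TrivSqZeroExt R M) {m : M} (hm : m ≠ 0) :
    x ^ n ≠ inr m := by
  intro h
  have hfst : x.fst = 0 := eq_zero_of_pow_eq_zero (by simpa using congrArg fst h)
  have hx : x = inr x.snd := ext hfst rfl
  obtain ⟨k, rfl⟩ : ∃ k, n = k + 2 := ⟨n - 2, by omega⟩
  rw [pow_add, sq, hx, inr_mul_inr, mul_zero] at h
  exact hm (congrArg snd h).symm

theorem not_surjective_pow [Semiring R] [IsReduced R] [AddCommMonoid M] [Nontrivial M]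
    [Module R M] [Module Rᵐᵒᵖ M] [SMulCommClass R Rᵐᵒᵖ M] {n : ℕ} (hn : 2 ≤ n) :
    ¬ Function.Surjective (· ^ n : TrivSqZeroExt R M → _) := fun h ↦
  have ⟨m, hm⟩ := exists_ne (0 : M)
  have ⟨x, hx⟩ := h (inr m)
  pow_ne_inr hn x hm hx

end TrivSqZeroExt

/-- The skew dual numbers `F[ε; Frob]/(ε²)`, in which `ε c = c ^ 2 ε`. -/
abbrev FrobeniusDualNumber (F : Type*) [Field F] [CharP F 2] : Type _ :=
  TrivSqZeroExt F (RightTwist (frobenius F 2))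

namespace FrobeniusDualNumber

open TrivSqZeroExt

variable {F : Type*} [Field F] [CharP F 2]

theorem snd_sq (x : FrobeniusDualNumber F) : (x ^ 2).snd = (x.fst + x.fst ^ 2) • x.snd := by
  rw [sq, snd_mul, RightTwist.op_smul_eq, frobenius_def, add_smul]

variable [Finite F]

theorem surjOn_sq :
    SurjOn (· ^ 2 : FrobeniusDualNumber F → _) (fst ⁻¹' {0, 1}ᶜ) (fst ⁻¹' {0, 1}ᶜ) := by
  intro y hy
  simp only [mem_preimage, mem_compl_iff, mem_insert_iff, mem_singleton_iff, not_or] at hy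
  obtain ⟨c, hc⟩ := surjective_frobenius F 2 y.fst
  rw [frobenius_def] at hc
  have hc0 : c ≠ 0 := by rintro rfl; simp [← hc] at hy
  have hc1 : c ≠ 1 := by rintro rfl; simp [← hc] at hy
  have hunit : c + c ^ 2 ≠ 0 := by
    rw [show c + c ^ 2 = c * (c + 1) by ring]
    exact mul_ne_zero hc0 fun h ↦ hc1 (CharTwo.add_eq_zero.1 h)
  refine ⟨inl c + inr ((c + c ^ 2)⁻¹ • y.snd), ?_, ext (by simpa using hc) ?_⟩
  · simpa using And.intro hc0 hc1
  · dsimp only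
    rw [snd_sq]
    simp only [fst_add, fst_inl, fst_inr, snd_add, snd_inl, snd_inr, add_zero, zero_add]
    exact smul_inv_smul₀ hunit _

theorem surjOn_pow_two_pow (a : ℕ) :
    SurjOn (· ^ 2 ^ a : FrobeniusDualNumber F → _) (fst ⁻¹' {0, 1}ᶜ) (fst ⁻¹' {0, 1}ᶜ) := by
  rw [← pow_iterate]
  exact surjOn_sq.iterate a

theorem one_sub_two_div_card_le_ringPowerRatio (a : ℕ) :
    1 - 2 / Nat.card F ≤ ringPowerRatio (2 ^ a) (FrobeniusDualNumber F) := by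
  have h := one_sub_ncard_div_le_ringPowerRatio (2 ^ a)
    (s := (fst ⁻¹' {0, 1} : Set (FrobeniusDualNumber F)))
    (preimage_compl ▸ (surjOn_pow_two_pow a).subset_range)
  rw [ncard_fst_preimage, ncard_pair zero_ne_one, natCard_eq, RightTwist.natCard_eq] at h
  convert h using 2
  push_cast
  field_simp

end FrobeniusDualNumber

open FrobeniusDualNumber in
theorem tendsto_ringPowerRatio_frobeniusDualNumber_galoisField (a : ℕ) :
    Tendsto (fun r ↦ ringPowerRatio (2 ^ a) (FrobeniusDualNumber (GaloisField 2 r)))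
      atTop (𝓝 1) := by
  have hcard : Tendsto (fun r ↦ (Nat.card (GaloisField 2 r) : ℝ)) atTop atTop :=
    (tendsto_pow_atTop_atTop_of_one_lt one_lt_two).congr'
      ((eventually_ne_atTop 0).mono fun r hr ↦ by simp [GaloisField.card 2 r hr])
  have hlower : Tendsto (fun r ↦ 1 - 2 / (Nat.card (GaloisField 2 r) : ℝ)) atTop (𝓝 1) := by
    simpa using tendsto_const_nhds.sub (tendsto_const_nhds.div_atTop hcard)
  exact tendsto_of_tendsto_of_tendsto_of_le_of_le hlower tendsto_const_nhds
    (fun _ ↦ one_sub_two_div_card_le_ringPowerRatio a) fun _ ↦ (ringPowerRatio_mem_Icc _).2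

theorem closure_ringPowerRatioSet_eq_Icc (a M : ℕ) (ha : 2 ≤ a) (hM : M = 2 ^ a) :
    closure (ringPowerRatioSet M) = Set.Icc (0 : ℝ) 1 := by
  subst hM
  have hnear : (1 : ℝ) ∈ closure (ringPowerRatioSet (2 ^ a) ∩ Iio 1) := by
    refine mem_closure_of_tendsto (tendsto_ringPowerRatio_frobeniusDualNumber_galoisField a)
      (Eventually.of_forall fun _ ↦ ⟨⟨_, inferInstance, ZMod.algebra _ 2, inferInstance, rfl⟩, ?_⟩)
    exact ringPowerRatio_lt_one _
      (TrivSqZeroExt.not_surjective_pow (le_self_pow one_le_two (by omega)))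
  exact closure_coe_submonoid_eq_Icc (ringPowerRatioSubmonoid (2 ^ a))
    (ringPowerRatioSet_subset_Icc _) hnear
end
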